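/- For every integer n ≥ 2 and every vertex u of the BCDC network B_n, the subgraph of B_n induced by the neighborhood N_{B_n}(u) is the disjoint union of two complete graphs K_{n−1} with no edges between them. -/

import Mathlib

/-!
In the line graph of `G`, the neighbours of an edge `ab` are the other edges at `a` together
with the other edges at `b`. Each of these two families is a clique, and an edge `ac` at `a`
meets an edge `bd` at `b` only if `c = d`, which closes a triangle `abc`. So for a
triangle-free `n`-regular graph the neighbourhood of every edge splits into two cliques of
size `n - 1` with no edges between them. The crossed cube is such a graph: a vertex of
`CQ^0_{n-1}` has exactly one neighbour in `CQ^1_{n-1}`, namely the image of its tail under an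
explicit involution `crossNeighbor`, and induction on `n` gives regularity and
triangle-freeness.
-/

open SimpleGraph

/-! ## Structure connectivity -/

/-- The set of vertices covered by a family of subgraphs of `G`. -/
def SimpleGraph.cutVerts {V : Type*} {G : SimpleGraph V} (F : Finset G.Subgraph) : Set V :=
  ⋃ A ∈ F, A.verts

/-- A family `F` of subgraphs of `G` is a subgraph cut if deleting all vertices of members of `F`
leaves a graph that is disconnected or has at most one vertex. -/
def SimpleGraph.IsSubgraphCut {V : Type*} (G : SimpleGraph V) (F : Finset G.Subgraph) : Prop :=
  ¬ (G.induce (SimpleGraph.cutVerts F)ᶜ).Connected ∨ ((SimpleGraph.cutVerts F)ᶜ : Set V).Subsingleton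

/-- An `H`-structure cut of `G`: a subgraph cut all of whose members are isomorphic to `H`. -/
def SimpleGraph.IsStructureCut {V W : Type*} (G : SimpleGraph V) (H : SimpleGraph W)
    (F : Finset G.Subgraph) : Prop :=
  G.IsSubgraphCut F ∧ ∀ A ∈ F, Nonempty (A.coe ≃g H)

/-- An `H`-substructure cut of `G`: a subgraph cut all of whose members are isomorphic to a
connected subgraph of `H`. -/
def SimpleGraph.IsSubstructureCut {V W : Type*} (G : SimpleGraph V) (H : SimpleGraph W)
    (F : Finset G.Subgraph) : Prop :=
  G.IsSubgraphCut F ∧ ∀ A ∈ F, ∃ K : H.Subgraph, K.Connected ∧ Nonempty (A.coe ≃g K.coe)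

/-- The `H`-structure connectivity `κ(G; H)`. -/
noncomputable def SimpleGraph.structConn {V W : Type*} (G : SimpleGraph V) (H : SimpleGraph W) : ℕ :=
  sInf {k | ∃ F : Finset G.Subgraph, G.IsStructureCut H F ∧ F.card = k}

/-- The `H`-substructure connectivity `κˢ(G; H)`. -/
noncomputable def SimpleGraph.substructConn {V W : Type*} (G : SimpleGraph V) (H : SimpleGraph W) : ℕ :=
  sInf {k | ∃ F : Finset G.Subgraph, G.IsSubstructureCut H F ∧ F.card = k}

/-- The star `K_{1,t}` with center `0` and `t` leaves. -/
def starGraph (t : ℕ) : SimpleGraph (Fin (t + 1)) :=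
  SimpleGraph.fromRel (fun i _ => i = 0)
/-! ## The crossed cube and the BCDC network -/

/-- Binary strings of length `n` (`CQVertex (n+1) = Bool × CQVertex n`,
the first component being the leading bit `x_n`). -/
def CQVertex : ℕ → Type
  | 0 => Unit
  | n + 1 => Bool × CQVertex n

/-- The `i`-th bit `x_i` of a binary string `x = x_{n-1} … x_1 x_0`. -/
def CQbit : (n : ℕ) → CQVertex n → ℕ → Bool
  | 0, _, _ => false
  | n + 1, x, i => if i = n then x.1 else CQbit n x.2 i

/-- Two binary strings `x = x_1 x_0` and `y = y_1 y_0` are pair related iff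
`(x, y) ∈ {(00,00), (10,10), (01,11), (11,01)}`. -/
def pairRel (x1 x0 y1 y0 : Bool) : Prop :=
  (x0 = false ∧ y0 = false ∧ y1 = x1) ∨ (x0 = true ∧ y0 = true ∧ y1 = !x1)

/-- The adjacency relation of the `n`-dimensional crossed cube: `CQ_1 = K_2`, and
`u = 0u_{n-2}…u_0`, `v = 1v_{n-2}…v_0` are adjacent in `CQ_n` iff (i) `u_{n-2} = v_{n-2}`
whenever `n` is even, and (ii) `u_{2i+1}u_{2i} ∼ v_{2i+1}v_{2i}` for all `0 ≤ i < ⌊(n-1)/2⌋`. -/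
def CQrel : (n : ℕ) → CQVertex n → CQVertex n → Prop
  | 0, _, _ => False
  | n + 1, u, v =>
      (u.1 = v.1 ∧ CQrel n u.2 v.2) ∨
      (u.1 ≠ v.1 ∧
        ((n + 1) % 2 = 0 → CQbit n u.2 (n - 1) = CQbit n v.2 (n - 1)) ∧
        ∀ i < n / 2, pairRel (CQbit n u.2 (2 * i + 1)) (CQbit n u.2 (2 * i))
          (CQbit n v.2 (2 * i + 1)) (CQbit n v.2 (2 * i)))

/-- The `n`-dimensional crossed cube `CQ_n`. -/
def crossedCube (n : ℕ) : SimpleGraph (CQVertex n) :=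
  SimpleGraph.fromRel (CQrel n)

/-- The `n`-dimensional BCDC network `B_n`: the line graph of the crossed cube `CQ_n`. -/
def BCDC (n : ℕ) : SimpleGraph (crossedCube n).edgeSet :=
  (crossedCube n).lineGraph

namespace SimpleGraph

variable {V : Type*} {G : SimpleGraph V} {a b v : V}

variable (G) in
def incidentEdges (v : V) : Set G.edgeSet := Subtype.val ⁻¹' G.incidenceSet v

@[simp]
lemma mem_incidentEdges {e : G.edgeSet} : e ∈ G.incidentEdges v ↔ v ∈ (e : Sym2 V) :=
  and_iff_right e.2

lemma isClique_lineGraph_incidentEdges : G.lineGraph.IsClique (G.incidentEdges v) :=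
  fun _ he _ hf hne => lineGraph_adj_iff_exists.mpr ⟨hne, v, he.2, hf.2⟩

lemma lineGraph_neighborSet (h : G.Adj a b) :
    G.lineGraph.neighborSet ⟨s(a, b), h⟩ =
      (G.incidentEdges a ∪ G.incidentEdges b) \ {⟨s(a, b), h⟩} := by
  ext e
  simp [lineGraph_adj_iff_exists, ne_comm, and_comm]

lemma ncard_incidentEdges : (G.incidentEdges v).ncard = (G.neighborSet v).ncard := by
  classical
  rw [incidentEdges, Set.ncard_preimage_of_injective_subset_range Subtype.val_injective
    (by simpa using G.incidenceSet_subset v), ← Nat.card_coe_set_eq, ← Nat.card_coe_set_eq,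
    Nat.card_congr (G.incidenceSetEquivNeighborSet v)]

lemma disjoint_incidentEdges_sdiff (h : G.Adj a b) :
    Disjoint (G.incidentEdges a \ {⟨s(a, b), h⟩}) (G.incidentEdges b \ {⟨s(a, b), h⟩}) := by
  rw [Set.disjoint_left]
  rintro e ⟨ha, hne⟩ ⟨hb, -⟩
  exact hne (Subtype.ext (G.incidenceSet_inter_incidenceSet_subset h.ne ⟨ha, hb⟩))

lemma not_lineGraph_adj_of_cliqueFree (hG : G.CliqueFree 3) (h : G.Adj a b) {x y : G.edgeSet}
    (hx : x ∈ G.incidentEdges a \ {⟨s(a, b), h⟩}) (hy : y ∈ G.incidentEdges b \ {⟨s(a, b), h⟩}) :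
    ¬ G.lineGraph.Adj x y := by
  classical
  intro hxy
  obtain ⟨-, w, hwx, hwy⟩ := lineGraph_adj_iff_exists.mp hxy
  have eq_of_mem {z : G.edgeSet} (ha : a ∈ (z : Sym2 V)) (hb : b ∈ (z : Sym2 V)) :
      z = ⟨s(a, b), h⟩ :=
    Subtype.ext ((Sym2.mem_and_mem_iff h.ne).mp ⟨ha, hb⟩)
  have haw : a ≠ w := by rintro rfl; exact hy.2 (eq_of_mem hwy hy.1.2)
  have hbw : b ≠ w := by rintro rfl; exact hx.2 (eq_of_mem hx.1.2 hwx)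
  exact hG {a, b, w} (is3Clique_triple_iff.mpr ⟨h,
    G.adj_of_mem_incidenceSet haw hx.1 ⟨x.2, hwx⟩, G.adj_of_mem_incidenceSet hbw hy.1 ⟨y.2, hwy⟩⟩)

end SimpleGraph

namespace CQVertex

def ofBits : (n : ℕ) → (ℕ → Bool) → CQVertex n
  | 0, _ => ()
  | n + 1, f => (f n, ofBits n f)

lemma CQbit_ofBits : ∀ {n i : ℕ} (f : ℕ → Bool), i < n → CQbit n (ofBits n f) i = f i
  | n + 1, i, f, hi => by
    by_cases hin : i = n
    · simp [ofBits, CQbit, hin]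
    · simp only [ofBits, CQbit, if_neg hin]
      exact CQbit_ofBits f (by omega)

lemma ext : ∀ {n : ℕ} {x y : CQVertex n}, (∀ i < n, CQbit n x i = CQbit n y i) → x = y
  | 0, _, _, _ => rfl
  | n + 1, x, y, h => by
    refine Prod.ext (by simpa [CQbit] using h n (by omega)) (ext fun i hi => ?_)
    simpa [CQbit, show i ≠ n by omega] using h i (by omega)

end CQVertex

open CQVertex

/-- The pair relation keeps bit `2i` and flips bit `2i+1` exactly when bit `2i` is set; a
leftover top bit is kept by condition (i). -/
def crossNeighbor (n : ℕ) (x : CQVertex n) : CQVertex n :=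
  ofBits n fun i => if i % 2 = 0 then CQbit n x i else xor (CQbit n x i) (CQbit n x (i - 1))

lemma CQbit_crossNeighbor_of_even {n i : ℕ} (x : CQVertex n) (hi : i < n) (h2 : i % 2 = 0) :
    CQbit n (crossNeighbor n x) i = CQbit n x i := by
  rw [crossNeighbor, CQbit_ofBits _ hi, if_pos h2]

lemma CQbit_crossNeighbor_of_odd {n i : ℕ} (x : CQVertex n) (hi : i < n) (h2 : i % 2 = 1) :
    CQbit n (crossNeighbor n x) i = xor (CQbit n x i) (CQbit n x (i - 1)) := by
  rw [crossNeighbor, CQbit_ofBits _ hi, if_neg (by omega)]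

lemma crossNeighbor_involutive (n : ℕ) : Function.Involutive (crossNeighbor n) := by
  intro x
  refine ext fun i hi => ?_
  rcases Nat.mod_two_eq_zero_or_one i with h2 | h2
  · rw [CQbit_crossNeighbor_of_even _ hi h2, CQbit_crossNeighbor_of_even _ hi h2]
  · rw [CQbit_crossNeighbor_of_odd _ hi h2, CQbit_crossNeighbor_of_odd _ hi h2,
      CQbit_crossNeighbor_of_even _ (by omega) (by omega), Bool.xor_assoc, Bool.xor_self,
      Bool.xor_false]

lemma pairRel_iff {x1 x0 y1 y0 : Bool} : pairRel x1 x0 y1 y0 ↔ y0 = x0 ∧ y1 = xor x1 x0 := by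
  cases x0 <;> cases y0 <;> cases x1 <;> cases y1 <;> simp [pairRel]

/-- The clause of `CQrel (n + 1)` for strings with different leading bits, on their tails. -/
def CrossRel (n : ℕ) (x y : CQVertex n) : Prop :=
  ((n + 1) % 2 = 0 → CQbit n x (n - 1) = CQbit n y (n - 1)) ∧
  ∀ i < n / 2, pairRel (CQbit n x (2 * i + 1)) (CQbit n x (2 * i))
    (CQbit n y (2 * i + 1)) (CQbit n y (2 * i))

lemma crossRel_iff {n : ℕ} {x y : CQVertex n} : CrossRel n x y ↔ y = crossNeighbor n x := by
  simp only [CrossRel, pairRel_iff]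
  constructor
  · rintro ⟨htop, hpair⟩
    refine ext fun i hi => ?_
    rcases Nat.mod_two_eq_zero_or_one i with h2 | h2
    · rw [CQbit_crossNeighbor_of_even _ hi h2]
      by_cases hlast : n % 2 = 1 ∧ i = n - 1
      · rw [hlast.2]; exact (htop (by omega)).symm
      · simpa [show 2 * (i / 2) = i by omega] using (hpair (i / 2) (by omega)).1
    · rw [CQbit_crossNeighbor_of_odd _ hi h2]
      have h := (hpair (i / 2) (by omega)).2
      rwa [show 2 * (i / 2) + 1 = i by omega, show 2 * (i / 2) = i - 1 by omega] at h
  · rintro rfl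
    refine ⟨fun _ => (CQbit_crossNeighbor_of_even x (by omega) (by omega)).symm,
      fun i hi => ⟨CQbit_crossNeighbor_of_even x (by omega) (by omega), ?_⟩⟩
    rw [CQbit_crossNeighbor_of_odd x (by omega) (by omega), Nat.add_sub_cancel]

lemma crossedCube_adj_succ {n : ℕ} {u v : CQVertex (n + 1)} :
    (crossedCube (n + 1)).Adj u v ↔
      (u.1 = v.1 ∧ (crossedCube n).Adj u.2 v.2) ∨ (u.1 ≠ v.1 ∧ v.2 = crossNeighbor n u.2) := by
  have hrel (x y : CQVertex (n + 1)) : CQrel (n + 1) x y ↔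
      (x.1 = y.1 ∧ CQrel n x.2 y.2) ∨ (x.1 ≠ y.1 ∧ y.2 = crossNeighbor n x.2) := by
    rw [← crossRel_iff]; rfl
  have hsymm : u.2 = crossNeighbor n v.2 ↔ v.2 = crossNeighbor n u.2 := by
    rw [eq_comm, (crossNeighbor_involutive n).eq_iff]
  have hext : u = v ↔ u.1 = v.1 ∧ u.2 = v.2 := Prod.ext_iff
  simp only [crossedCube, fromRel_adj, hrel, hsymm, hext, ne_eq, @eq_comm _ v.1]
  tauto

lemma crossedCube_neighborSet_succ {n : ℕ} (u : CQVertex (n + 1)) :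
    (crossedCube (n + 1)).neighborSet u =
      insert (!u.1, crossNeighbor n u.2) (Prod.mk u.1 '' (crossedCube n).neighborSet u.2) := by
  ext v
  rw [mem_neighborSet, crossedCube_adj_succ]
  obtain ⟨b, y⟩ : Bool × CQVertex n := v
  change _ ↔ (b, y) ∈ (insert _ _ : Set (Bool × CQVertex n))
  cases u.1 <;> cases b <;> simp [eq_comm]

lemma encard_neighborSet_crossedCube :
    ∀ {n : ℕ} (u : CQVertex n), ((crossedCube n).neighborSet u).encard = n
  | 0, u => by simp [crossedCube, neighborSet, CQrel]
  | n + 1, u => by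
    -- `CQVertex (n + 1)` is a product only after unfolding, which the `Set` lemmas do not do
    show Set.encard (α := Bool × CQVertex n) ((crossedCube (n + 1)).neighborSet u) = _
    rw [crossedCube_neighborSet_succ, Set.encard_insert_of_notMem (by simp),
      (Prod.mk_right_injective u.1).encard_image, encard_neighborSet_crossedCube]
    norm_cast

/-- The edges between the two halves of `CQ_(n+1)` form the perfect matching given by
`crossNeighbor`, and a triangle meeting both halves would use two matching edges at one vertex. -/
lemma crossedCube_no_triangle : ∀ {n : ℕ} {u v w : CQVertex n},
    (crossedCube n).Adj u v → (crossedCube n).Adj u w → (crossedCube n).Adj v w → False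
  | 0, _, _, _, h, _, _ => by simp [crossedCube, CQrel] at h
  | n + 1, u, v, w, huv, huw, hvw => by
    have hinv := crossNeighbor_involutive n
    have hbits : u.1 = v.1 ∨ u.1 = w.1 ∨ v.1 = w.1 := by
      cases u.1 <;> cases v.1 <;> cases w.1 <;> simp
    rcases crossedCube_adj_succ.mp huv with ⟨e1, a1⟩ | ⟨e1, a1⟩ <;>
    rcases crossedCube_adj_succ.mp huw with ⟨e2, a2⟩ | ⟨e2, a2⟩ <;>
    rcases crossedCube_adj_succ.mp hvw with ⟨e3, a3⟩ | ⟨e3, a3⟩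
    all_goals first
      | exact crossedCube_no_triangle a1 a2 a3
      | grind [Function.Involutive, Adj.ne]

lemma ncard_neighborSet_crossedCube {n : ℕ} (u : CQVertex n) :
    ((crossedCube n).neighborSet u).ncard = n := by
  rw [Set.ncard_def, encard_neighborSet_crossedCube, ENat.toNat_natCast]

lemma crossedCube_cliqueFree_three (n : ℕ) : (crossedCube n).CliqueFree 3 := by
  classical
  intro s hs
  obtain ⟨u, v, w, huv, huw, hvw, -⟩ := is3Clique_iff.mp hs
  exact crossedCube_no_triangle huv huw hvw

theorem bcdc_neighborhood_two_cliques_general (n : ℕ) (u : (crossedCube n).edgeSet) :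
    ∃ S T : Set (crossedCube n).edgeSet,
      S ∪ T = (BCDC n).neighborSet u ∧ Disjoint S T ∧
      S.ncard = n - 1 ∧ T.ncard = n - 1 ∧
      (∀ x ∈ S, ∀ y ∈ S, x ≠ y → (BCDC n).Adj x y) ∧
      (∀ x ∈ T, ∀ y ∈ T, x ≠ y → (BCDC n).Adj x y) ∧
      (∀ x ∈ S, ∀ y ∈ T, ¬ (BCDC n).Adj x y) := by
  obtain ⟨e, he⟩ := u
  induction e using Sym2.ind with | _ a b => ?_
  have hab : (crossedCube n).Adj a b := he
  refine ⟨(crossedCube n).incidentEdges a \ {⟨s(a, b), he⟩},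
    (crossedCube n).incidentEdges b \ {⟨s(a, b), he⟩}, ?_, disjoint_incidentEdges_sdiff hab,
    ?_, ?_, ?_, ?_, fun x hx y hy =>
      not_lineGraph_adj_of_cliqueFree (crossedCube_cliqueFree_three n) hab hx hy⟩
  · rw [BCDC, lineGraph_neighborSet hab, Set.union_sdiff_distrib]
  · rw [Set.ncard_sdiff_singleton_of_mem (by simp), ncard_incidentEdges,
      ncard_neighborSet_crossedCube]
  · rw [Set.ncard_sdiff_singleton_of_mem (by simp), ncard_incidentEdges,
      ncard_neighborSet_crossedCube]
  · exact isClique_lineGraph_incidentEdges.subset Set.sdiff_subset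
  · exact isClique_lineGraph_incidentEdges.subset Set.sdiff_subset

/-- For `n ≥ 2` and every vertex `u` of `B_n`, the subgraph of `B_n` induced by the
neighborhood of `u` is the disjoint union of two complete graphs `K_{n-1}`
with no edges between them. -/
theorem bcdc_neighborhood_two_cliques (n : ℕ) (hn : 2 ≤ n) (u : (crossedCube n).edgeSet) :
    ∃ S T : Set (crossedCube n).edgeSet,
      S ∪ T = (BCDC n).neighborSet u ∧ Disjoint S T ∧
      S.ncard = n - 1 ∧ T.ncard = n - 1 ∧
      (∀ x ∈ S, ∀ y ∈ S, x ≠ y → (BCDC n).Adj x y) ∧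
      (∀ x ∈ T, ∀ y ∈ T, x ≠ y → (BCDC n).Adj x y) ∧
      (∀ x ∈ S, ∀ y ∈ T, ¬ (BCDC n).Adj x y) :=
  bcdc_neighborhood_two_cliques_general n u
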